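/- Let R be a commutative Krasner hyperring with nonzero identity, let φ : L(R) → L(R) ∪ {∅} be a function, and let T be a proper hyperideal of R that is φ-primary. If T is not a primary hyperideal, then T² ⊆ φ(T); equivalently, if T² ⊄ φ(T), then T is a primary hyperideal of R. -/

import Mathlib

universe u

/-- A commutative Krasner hyperring with nonzero identity. -/
class KrasnerHyperring (R : Type u) where
  hadd : R → R → Set R
  mul : R → R → R
  zero : R
  one : R
  neg : R → R
  hadd_nonempty : ∀ a b : R, (hadd a b).Nonempty
  hadd_comm : ∀ a b : R, hadd a b = hadd b a
  hadd_assoc : ∀ a b c : R, (⋃ x ∈ hadd a b, hadd x c) = ⋃ y ∈ hadd b c, hadd a y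
  hadd_zero : ∀ a : R, hadd a zero = {a}
  zero_mem_hadd_neg : ∀ a : R, zero ∈ hadd a (neg a)
  neg_unique : ∀ a b : R, zero ∈ hadd a b → b = neg a
  reversible : ∀ a b c : R, c ∈ hadd a b → b ∈ hadd (neg a) c
  mul_assoc : ∀ a b c : R, mul (mul a b) c = mul a (mul b c)
  mul_comm : ∀ a b : R, mul a b = mul b a
  mul_one : ∀ a : R, mul a one = a
  mul_zero : ∀ a : R, mul a zero = zero
  one_ne_zero : one ≠ zero
  distrib : ∀ a b c : R, (fun x => mul a x) '' hadd b c = hadd (mul a b) (mul a c)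

namespace KrasnerHyperring

variable {R : Type u} [KrasnerHyperring R]

/-- A hyperideal of a Krasner hyperring. -/
structure Hyperideal (R : Type u) [KrasnerHyperring R] where
  carrier : Set R
  nonempty' : carrier.Nonempty
  hadd_subset' : ∀ a ∈ carrier, ∀ b ∈ carrier, hadd a b ⊆ carrier
  neg_mem' : ∀ a ∈ carrier, neg a ∈ carrier
  mul_mem' : ∀ r : R, ∀ a ∈ carrier, mul r a ∈ carrier

instance : SetLike (Hyperideal R) R where
  coe := Hyperideal.carrier
  coe_injective := by rintro ⟨⟩ ⟨⟩ h; congr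

/-- A hyperideal is proper if it is not the whole hyperring. -/
def Hyperideal.IsProper (N : Hyperideal R) : Prop := (N : Set R) ≠ Set.univ

/-- `A ⊕ B` for subsets. -/
def haddSet (A B : Set R) : Set R := ⋃ a ∈ A, ⋃ b ∈ B, hadd a b

/-- `A ∘ B` : set of all products. -/
def mulSet (A B : Set R) : Set R := {x : R | ∃ a ∈ A, ∃ b ∈ B, x = mul a b}

/-- The hyperideal generated by a set (as a set). -/
def genIdeal (S : Set R) : Set R := ⋂₀ {C : Set R | (∃ I : Hyperideal R, C = ↑I) ∧ S ⊆ C}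

/-- Products of `n` elements of `S`. -/
def setPow (S : Set R) : ℕ → Set R
  | 0 => Set.univ
  | 1 => S
  | (n+2) => mulSet S (setPow S (n+1))

/-- `N^n` : the hyperideal generated by products of `n` elements of `N`. -/
def idealPow (N : Hyperideal R) (n : ℕ) : Set R := genIdeal (setPow (↑N) n)

/-- Powers of an element. -/
def hpow (a : R) : ℕ → R
  | 0 => one
  | (n+1) => mul a (hpow a n)

/-- The radical of a set. -/
def radical (A : Set R) : Set R := {a : R | ∃ n : ℕ, 0 < n ∧ hpow a n ∈ A}

/-- `(A : a)`. -/
def colon (A : Set R) (a : R) : Set R := {r : R | mul a r ∈ A}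

/-- `(A : M)` for a set `M`. -/
def colonSet (A B : Set R) : Set R := {r : R | ∀ b ∈ B, mul r b ∈ A}

/-- Prime hyperideal. -/
def IsPrime (N : Hyperideal R) : Prop :=
  N.IsProper ∧ ∀ a b : R, mul a b ∈ N → a ∈ N ∨ b ∈ N

/-- Weakly prime hyperideal. -/
def IsWeaklyPrime (N : Hyperideal R) : Prop :=
  N.IsProper ∧ ∀ a b : R, mul a b ∈ N → mul a b ≠ zero → a ∈ N ∨ b ∈ N

/-- `φ`-prime hyperideal. -/
def IsPhiPrime (φ : Hyperideal R → Set R) (N : Hyperideal R) : Prop :=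
  N.IsProper ∧ ∀ a b : R, mul a b ∈ N → mul a b ∉ φ N → a ∈ N ∨ b ∈ N

/-- Primary hyperideal. -/
def IsPrimary (N : Hyperideal R) : Prop :=
  N.IsProper ∧ ∀ a b : R, mul a b ∈ N → a ∈ N ∨ ∃ k : ℕ, 0 < k ∧ hpow b k ∈ N

/-- `φ`-primary hyperideal. -/
def IsPhiPrimary (φ : Hyperideal R → Set R) (N : Hyperideal R) : Prop :=
  N.IsProper ∧ ∀ a b : R, mul a b ∈ N → mul a b ∉ φ N →
    a ∈ N ∨ ∃ k : ℕ, 0 < k ∧ hpow b k ∈ N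

/-- `δ`-primary hyperideal. -/
def IsDeltaPrimary (δ : Hyperideal R → Hyperideal R) (N : Hyperideal R) : Prop :=
  N.IsProper ∧ ∀ a b : R, mul a b ∈ N → a ∈ N ∨ b ∈ δ N

/-- `φ`-`δ`-primary hyperideal. -/
def IsPhiDeltaPrimary (φ : Hyperideal R → Set R) (δ : Hyperideal R → Hyperideal R)
    (N : Hyperideal R) : Prop :=
  N.IsProper ∧ ∀ a b : R, mul a b ∈ N → mul a b ∉ φ N → a ∈ N ∨ b ∈ δ N

/-- `φ : L(R) → L(R) ∪ {∅}` : every value is a hyperideal or the empty set. -/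
def MapsToIdealOrEmpty (φ : Hyperideal R → Set R) : Prop :=
  ∀ I : Hyperideal R, φ I = ∅ ∨ ∃ J : Hyperideal R, φ I = ↑J

/-- A reduction function. -/
def IsReduction (φ : Hyperideal R → Set R) : Prop :=
  MapsToIdealOrEmpty φ ∧ (∀ I : Hyperideal R, φ I ⊆ ↑I) ∧
    ∀ I J : Hyperideal R, (I : Set R) ⊆ ↑J → φ I ⊆ φ J

/-- An expansion function. -/
def IsExpansion (δ : Hyperideal R → Hyperideal R) : Prop :=
  (∀ I : Hyperideal R, (I : Set R) ⊆ ↑(δ I)) ∧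
    ∀ I J : Hyperideal R, (I : Set R) ⊆ ↑J → (δ I : Set R) ⊆ ↑(δ J)

/-- `φ_w(N) = ⋂_{n ≥ 1} N^n`. -/
def phiW (N : Hyperideal R) : Set R := ⋂ (n : ℕ) (_ : 1 ≤ n), idealPow N n

lemma zero_mem (N : Hyperideal R) : zero ∈ N := by
  obtain ⟨a, ha⟩ := N.nonempty'
  exact N.hadd_subset' a ha (neg a) (N.neg_mem' a ha) (zero_mem_hadd_neg a)

lemma proper_of_subset_proper {M T : Hyperideal R} (h : (M : Set R) ⊆ ↑T)
    (hT : T.IsProper) : M.IsProper :=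
  fun hu => hT (Set.univ_subset_iff.mp (hu ▸ h))


/-! If `(a, b)` witnesses that `T` is not primary (`a ∘ b ∈ T`, `a ∉ T`, `b ∉ √T`), then so does
every pair `(x, y)` with `x ∈ a ⊕ p`, `y ∈ b ⊕ q` and `p, q ∈ T`; since `T` is `φ`-primary, all
these products `x ∘ y` lie in `φ(T)`, which is then nonempty, hence a hyperideal. Reversibility gives
`p ∈ (-a) ⊕ x` and `q ∈ (-b) ⊕ y`, so `p ∘ q` is generated in `φ(T)` by the four products
`a ∘ b`, `a ∘ y`, `x ∘ b`, `x ∘ y`, each of which is of the above form (with `p = 0` or `q = 0`). -/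

lemma mem_hadd_zero (a : R) : a ∈ hadd a zero := by
  rw [hadd_zero]; rfl

lemma mem_hadd_neg_of_mem_hadd {a b c : R} (hc : c ∈ hadd a b) : a ∈ hadd c (neg b) := by
  rw [hadd_comm]
  exact reversible b a c (by rwa [hadd_comm])

lemma mul_mem_hadd_of_mem {a b c x : R} (hx : x ∈ hadd b c) :
    mul a x ∈ hadd (mul a b) (mul a c) := by
  rw [← distrib a b c]; exact ⟨x, hx, rfl⟩

lemma neg_neg (a : R) : neg (neg a) = a :=
  (neg_unique (neg a) a (hadd_comm a (neg a) ▸ zero_mem_hadd_neg a)).symm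

lemma mul_neg (a b : R) : mul a (neg b) = neg (mul a b) := by
  apply neg_unique
  simpa only [mul_zero] using mul_mem_hadd_of_mem (a := a) (zero_mem_hadd_neg b)

lemma neg_mul (a b : R) : mul (neg a) b = neg (mul a b) := by
  rw [mul_comm, mul_neg, mul_comm]

lemma exists_mem_hadd_of_mem_hadd_hadd {a b c w z : R} (hw : w ∈ hadd a b)
    (hz : z ∈ hadd w c) : ∃ u ∈ hadd b c, z ∈ hadd a u := by
  have hmem : z ∈ ⋃ x ∈ hadd a b, hadd x c := Set.mem_biUnion hw hz
  rw [hadd_assoc a b c] at hmem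
  simpa using hmem

lemma genIdeal_subset {S : Set R} {I : Hyperideal R} (h : S ⊆ I) : genIdeal S ⊆ I :=
  fun _ hz => hz I ⟨⟨I, rfl⟩, h⟩

namespace Hyperideal

variable (N : Hyperideal R)

lemma hadd_mem {a b z : R} (ha : a ∈ N) (hb : b ∈ N) (hz : z ∈ hadd a b) : z ∈ N :=
  N.hadd_subset' a ha b hb hz

lemma neg_mem {a : R} (ha : a ∈ N) : neg a ∈ N := N.neg_mem' a ha

lemma mul_mem_left (r : R) {a : R} (ha : a ∈ N) : mul r a ∈ N := N.mul_mem' r a ha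

lemma mul_mem_right {a : R} (ha : a ∈ N) (r : R) : mul a r ∈ N :=
  mul_comm r a ▸ N.mul_mem_left r ha

variable {N}

lemma mem_of_mem_hadd {a p x : R} (hp : p ∈ N) (hx : x ∈ hadd a p) (hxN : x ∈ N) : a ∈ N :=
  N.hadd_mem hxN (N.neg_mem hp) (mem_hadd_neg_of_mem_hadd hx)

lemma mul_mem_of_mem_hadd_left {c u v w : R} (hw : w ∈ hadd u v) (hu : mul c u ∈ N)
    (hv : mul c v ∈ N) : mul c w ∈ N :=
  N.hadd_mem hu hv (mul_mem_hadd_of_mem hw)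

lemma mul_mem_of_mem_hadd_right {c u v w : R} (hw : w ∈ hadd u v) (hu : mul u c ∈ N)
    (hv : mul v c ∈ N) : mul w c ∈ N := by
  rw [mul_comm] at hu hv ⊢
  exact mul_mem_of_mem_hadd_left hw hu hv

lemma mul_mem_of_mem_hadd_of_mem_hadd {a b p q x y : R} (hx : x ∈ hadd a p) (hy : y ∈ hadd b q)
    (hab : mul a b ∈ N) (haq : mul a q ∈ N) (hpb : mul p b ∈ N) (hpq : mul p q ∈ N) :
    mul x y ∈ N :=
  mul_mem_of_mem_hadd_left hy (mul_mem_of_mem_hadd_right hx hab hpb)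
    (mul_mem_of_mem_hadd_right hx haq hpq)

lemma mul_mem_of_mem_hadd_of_mem_hadd' {a b p q x y : R} (hx : x ∈ hadd a p)
    (hy : y ∈ hadd b q) (hab : mul a b ∈ N) (hay : mul a y ∈ N) (hxb : mul x b ∈ N)
    (hxy : mul x y ∈ N) : mul p q ∈ N := by
  refine mul_mem_of_mem_hadd_of_mem_hadd (reversible a p x hx) (reversible b q y hy) ?_ ?_ ?_ hxy
  · rwa [neg_mul, mul_neg, neg_neg]
  · rw [neg_mul]; exact N.neg_mem hay
  · rw [mul_neg]; exact N.neg_mem hxb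

lemma exists_hpow_mem_hadd {b q y : R} (hq : q ∈ N) (hy : y ∈ hadd b q) :
    ∀ k : ℕ, ∃ s ∈ N, hpow y k ∈ hadd (hpow b k) s
  | 0 => ⟨zero, zero_mem N, mem_hadd_zero one⟩
  | k + 1 => by
    obtain ⟨s, hs, hk⟩ := exists_hpow_mem_hadd hq hy k
    have hyb : mul y (hpow b k) ∈ hadd (hpow b (k + 1)) (mul q (hpow b k)) := by
      have h := mul_mem_hadd_of_mem (a := hpow b k) hy
      rwa [mul_comm _ y, mul_comm _ b, mul_comm _ q] at h
    obtain ⟨u, hu, hyk⟩ := exists_mem_hadd_of_mem_hadd_hadd hyb (mul_mem_hadd_of_mem hk)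
    exact ⟨u, N.hadd_mem (N.mul_mem_right hq _) (N.mul_mem_left y hs) hu, hyk⟩

lemma mem_radical_of_mem_hadd {b q y : R} (hq : q ∈ N) (hy : y ∈ hadd b q)
    (hyN : y ∈ radical N) : b ∈ radical N := by
  obtain ⟨k, hk, hyk⟩ := hyN
  obtain ⟨s, hs, hbk⟩ := exists_hpow_mem_hadd (N.neg_mem hq) (mem_hadd_neg_of_mem_hadd hy) k
  exact ⟨k, hk, N.hadd_mem hyk hs hbk⟩

end Hyperideal

lemma exists_not_mem_of_not_isPrimary {T : Hyperideal R} (hT : T.IsProper) (h : ¬IsPrimary T) :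
    ∃ a b, mul a b ∈ T ∧ a ∉ T ∧ b ∉ radical T := by
  by_contra! hc
  exact h ⟨hT, fun a b hab => or_iff_not_imp_left.2 (hc a b hab)⟩

lemma IsPhiPrimary.mul_mem {φ : Hyperideal R → Set R} {T : Hyperideal R} (hT : IsPhiPrimary φ T)
    {a b : R} (hab : mul a b ∈ T) (ha : a ∉ T) (hb : b ∉ radical T) : mul a b ∈ φ T := by
  by_contra h
  exact (hT.2 a b hab h).elim ha hb

lemma IsPhiPrimary.mul_mem_of_mem_hadd {φ : Hyperideal R → Set R} {T : Hyperideal R}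
    (hT : IsPhiPrimary φ T) {a b p q x y : R} (hab : mul a b ∈ T) (ha : a ∉ T)
    (hb : b ∉ radical T) (hp : p ∈ T) (hq : q ∈ T) (hx : x ∈ hadd a p) (hy : y ∈ hadd b q) :
    mul x y ∈ φ T :=
  hT.mul_mem
    (T.mul_mem_of_mem_hadd_of_mem_hadd hx hy hab (T.mul_mem_left a hq) (T.mul_mem_right hp b)
      (T.mul_mem_left p hq))
    (fun hxT => ha (T.mem_of_mem_hadd hp hx hxT))
    (fun hyT => hb (T.mem_radical_of_mem_hadd hq hy hyT))

/-- STATEMENT 10: If the proper hyperideal `T` is `φ`-primary but not primary,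
then `T² ⊆ φ(T)`. -/
theorem phiPrimary_not_primary_sq_subset {R : Type u} [KrasnerHyperring R]
    (φ : Hyperideal R → Set R) (hφ : MapsToIdealOrEmpty φ)
    (T : Hyperideal R) (hT : IsPhiPrimary φ T) (hnp : ¬ IsPrimary T) :
    idealPow T 2 ⊆ φ T := by
  obtain ⟨a, b, hab, ha, hb⟩ := exists_not_mem_of_not_isPrimary hT.1 hnp
  have hφT : ∀ {p q x y : R}, p ∈ T → q ∈ T → x ∈ hadd a p → y ∈ hadd b q → mul x y ∈ φ T :=
    hT.mul_mem_of_mem_hadd hab ha hb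
  have habφ : mul a b ∈ φ T := hφT (zero_mem T) (zero_mem T) (mem_hadd_zero a) (mem_hadd_zero b)
  obtain ⟨J, hJ⟩ := (hφ T).resolve_left (Set.nonempty_iff_ne_empty.mp ⟨_, habφ⟩)
  rw [hJ] at hφT habφ ⊢
  refine genIdeal_subset ?_
  rintro _ ⟨p, hp, q, hq, rfl⟩
  obtain ⟨x, hx⟩ := hadd_nonempty a p
  obtain ⟨y, hy⟩ := hadd_nonempty b q
  exact J.mul_mem_of_mem_hadd_of_mem_hadd' hx hy habφ
    (hφT (zero_mem T) hq (mem_hadd_zero a) hy) (hφT hp (zero_mem T) hx (mem_hadd_zero b))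
    (hφT hp hq hx hy)

end KrasnerHyperring
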